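/- For every integer d with 1 ≤ d ≤ 2(q−1), the evaluations {ev(M) : M ∈ A^d} form a basis of the projective Reed–Muller code PRM_d(q,2); in particular, PRM_d(q,2) has dimension |A^d|. -/

import Mathlib

open MvPolynomial

/-- The fixed representatives of the points of the projective plane over `F`:
the leftmost nonzero coordinate equals 1. -/
def stdRep (F : Type*) [Field F] : Set (Fin 3 → F) :=
  {v | v 0 = 1 ∨ (v 0 = 0 ∧ v 1 = 1) ∨ (v 0 = 0 ∧ v 1 = 0 ∧ v 2 = 1)}

/-- The evaluation map at the fixed representatives. -/
noncomputable def ev (F : Type*) [Field F] :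
    MvPolynomial (Fin 3) F →ₗ[F] (stdRep F → F) :=
  LinearMap.pi fun Q => (aeval (Q : Fin 3 → F)).toLinearMap

/-- The projective Reed–Muller code of degree `d` over the projective plane. -/
noncomputable def PRM (F : Type*) [Field F] (d : ℕ) : Submodule F (stdRep F → F) :=
  (homogeneousSubmodule (Fin 3) F d).map (ev F)

/-- The set of monomials `A₁^d`. -/
def A1 (F : Type*) [Field F] (q d : ℕ) : Set (MvPolynomial (Fin 3) F) :=
  {M | ∃ a0 a1 a2 : ℕ, 0 < a0 ∧ a0 + a1 + a2 = d ∧ a1 ≤ q - 1 ∧ a2 ≤ q - 1 ∧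
    M = X 0 ^ a0 * X 1 ^ a1 * X 2 ^ a2}

/-- The set of monomials `A₂^d`. -/
def A2 (F : Type*) [Field F] (q d : ℕ) : Set (MvPolynomial (Fin 3) F) :=
  {M | ∃ a1 a2 : ℕ, 0 < a1 ∧ a1 + a2 = d ∧ a2 ≤ q - 1 ∧ M = X 1 ^ a1 * X 2 ^ a2}

/-- The set of monomials `A₃^d`. -/
def A3 (F : Type*) [Field F] (d : ℕ) : Set (MvPolynomial (Fin 3) F) :=
  {X 2 ^ d}

/-!
Stratify the plane as `{[1 : y : z]} ⊔ {[0 : 1 : z]} ⊔ {[0 : 0 : 1]}`. Monomials in `A₁^d` vanish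
off the affine chart, on which they restrict to `y^a z^b` with `a, b < q`; monomials in `A₂^d`
vanish at `[0 : 0 : 1]` and restrict to `z^b`, `b < q`, on the line at infinity. Such monomial
functions are independent because a polynomial of degree `< q` in each variable that vanishes on
all of `F^n` is zero, so the evaluations are independent by triangularity. For spanning, `y^a`
only depends on `a` modulo `q - 1` when `a > 0`: reduce the exponents of `x₁, x₂` into
`[0, q - 1]` and give the excess to the first variable with positive exponent.
-/

theorem LinearIndepOn.union_of_map_eq_zero {R M N ι : Type*} [Ring R] [AddCommGroup M]
    [Module R M] [AddCommGroup N] [Module R N] {f : ι → M} {s t : Set ι} (g : M →ₗ[R] N)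
    (hs : LinearIndepOn R f s) (hgs : ∀ i ∈ s, g (f i) = 0) (ht : LinearIndepOn R (g ∘ f) t) :
    LinearIndepOn R f (s ∪ t) := by
  have hker : Submodule.span R (f '' s) ≤ LinearMap.ker g :=
    Submodule.span_le.mpr (by rintro _ ⟨i, hi, rfl⟩; exact hgs i hi)
  exact hs.union_of_quotient (ht.of_comp ((Submodule.span R (f '' s)).liftQ g hker))

theorem LinearIndepOn.finrank_span_image_eq_ncard {R M ι : Type*} [Ring R]
    [StrongRankCondition R] [AddCommGroup M] [Module R M] {v : ι → M} {s : Set ι}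
    (hs : LinearIndepOn R v s) :
    Module.finrank R (Submodule.span R (v '' s)) = s.ncard := by
  rw [Module.finrank, ← Cardinal.toNat_toENat, toENat_rank_span_set hs, Set.ncard_def]

theorem linearIndepOn_prod_pow (K σ : Type*) [Field K] [Fintype K] [Fintype σ] :
    LinearIndepOn K (fun (a : σ →₀ ℕ) (x : σ → K) => ∏ i, x i ^ a i)
      {a | ∀ i, a i < Fintype.card K} := by
  rw [linearIndepOn_iff]
  intro l hl hl0
  set P : MvPolynomial σ K := Finsupp.linearCombination K (basisMonomials σ K) l
  have hcoeff : ∀ a, coeff a P = l a := fun a =>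
    congrFun (congrArg DFunLike.coe ((basisMonomials σ K).repr_linearCombination l)) a
  have hP : P = 0 := by
    refine eq_zero_of_eval_zero_at_prod_finset P (fun _ => Finset.univ) (fun i => ?_) ?_
    · rw [Finset.card_univ, degreeOf_lt_iff Fintype.card_pos]
      intro a ha
      rw [mem_support_iff, hcoeff] at ha
      exact hl (Finsupp.mem_support_iff.mpr ha) i
    · intro x _
      simpa [P, Finsupp.linearCombination_apply, Finsupp.sum, eval_monomial,
        Finsupp.prod_fintype] using congrFun hl0 x
  ext a
  rw [← hcoeff, hP, coeff_zero, Finsupp.coe_zero, Pi.zero_apply]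

theorem Nat.exists_eq_add_mul_of_pos {n : ℕ} (hn : 0 < n) (a : ℕ) :
    ∃ b k, b ≤ n ∧ a = b + n * k ∧ (b = 0 → a = 0) := by
  rcases Nat.eq_zero_or_pos a with rfl | ha
  · exact ⟨0, 0, by omega, by omega, fun _ => rfl⟩
  · refine ⟨(a - 1) % n + 1, (a - 1) / n, ?_, ?_, by omega⟩
    · have := Nat.mod_lt (a - 1) hn; omega
    · have := Nat.div_add_mod (a - 1) n; omega

theorem FiniteField.pow_add_mul_card_sub_one {K : Type*} [Field K] [Fintype K] (y : K) {b : ℕ}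
    (hb : b ≠ 0) (k : ℕ) : y ^ (b + (Fintype.card K - 1) * k) = y ^ b := by
  rcases eq_or_ne y 0 with rfl | hy
  · rw [zero_pow hb, zero_pow (by omega)]
  · rw [pow_add, pow_mul, FiniteField.pow_card_sub_one_eq_one y hy, one_pow, mul_one]

theorem FiniteField.exists_le_card_sub_one_pow_eq {K : Type*} [Field K] [Fintype K]
    (a : ℕ) : ∃ b k, b ≤ Fintype.card K - 1 ∧ a = b + (Fintype.card K - 1) * k ∧
      ∀ y : K, y ^ a = y ^ b := by
  have hK : 0 < Fintype.card K - 1 := by have := Fintype.one_lt_card (α := K); omega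
  obtain ⟨b, k, hb, rfl, hb0⟩ := Nat.exists_eq_add_mul_of_pos hK a
  refine ⟨b, k, hb, rfl, fun y => ?_⟩
  rcases eq_or_ne b 0 with rfl | hb'
  · rw [hb0 rfl]
  · exact FiniteField.pow_add_mul_card_sub_one y hb' k

section ProjectivePlane

variable {F : Type*} [Field F]

theorem ev_apply (p : MvPolynomial (Fin 3) F) (Q : stdRep F) :
    ev F p Q = eval (Q : Fin 3 → F) p := by
  simp [ev]

def affinePoint (x : Fin 2 → F) : stdRep F := ⟨![1, x 0, x 1], Or.inl rfl⟩

def pointAtInfinity (x : Fin 1 → F) : stdRep F := ⟨![0, 1, x 0], Or.inr (Or.inl ⟨rfl, rfl⟩)⟩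

def cornerPoint : stdRep F := ⟨![0, 0, 1], Or.inr (Or.inr ⟨rfl, rfl, rfl⟩)⟩

variable {q : ℕ}

theorem linearIndepOn_ev_cornerPoint_A3 (d : ℕ) :
    LinearIndepOn F (LinearMap.proj (R := F) cornerPoint ∘ ev F) (A3 F d) :=
  LinearIndepOn.singleton (by simp [ev_apply, cornerPoint])

theorem ev_pointAtInfinity_eq_zero_of_mem_A1 {d : ℕ} {M : MvPolynomial (Fin 3) F}
    (hM : M ∈ A1 F q d) : LinearMap.funLeft F F pointAtInfinity (ev F M) = 0 := by
  obtain ⟨a0, a1, a2, h0, -, -, -, rfl⟩ := hM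
  funext x
  simp [ev_apply, pointAtInfinity, zero_pow h0.ne']

theorem ev_cornerPoint_eq_zero_of_mem_A1_union_A2 {d : ℕ} {M : MvPolynomial (Fin 3) F}
    (hM : M ∈ A1 F q d ∪ A2 F q d) : LinearMap.proj (R := F) cornerPoint (ev F M) = 0 := by
  rcases hM with ⟨a0, a1, a2, h0, -, -, -, rfl⟩ | ⟨a1, a2, h1, -, -, rfl⟩
  · simp [ev_apply, cornerPoint, zero_pow h0.ne']
  · simp [ev_apply, cornerPoint, zero_pow h1.ne']

theorem isHomogeneous_of_mem_A {d : ℕ} {M : MvPolynomial (Fin 3) F}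
    (hM : M ∈ A1 F q d ∪ A2 F q d ∪ A3 F d) : M.IsHomogeneous d := by
  rcases hM with (⟨a0, a1, a2, -, rfl, -, -, rfl⟩ | ⟨a1, a2, -, rfl, -, rfl⟩) | rfl
  · exact ((isHomogeneous_X_pow 0 a0).mul (isHomogeneous_X_pow 1 a1)).mul
      (isHomogeneous_X_pow 2 a2)
  · exact (isHomogeneous_X_pow 1 a1).mul (isHomogeneous_X_pow 2 a2)
  · exact isHomogeneous_X_pow 2 d

variable [Fintype F]

theorem linearIndepOn_ev_affinePoint_A1 (hq : Fintype.card F = q) (d : ℕ) :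
    LinearIndepOn F (LinearMap.funLeft F F affinePoint ∘ ev F) (A1 F q d) := by
  let g (a : Fin 2 →₀ ℕ) : MvPolynomial (Fin 3) F :=
    X 0 ^ (d - a 0 - a 1) * X 1 ^ a 0 * X 2 ^ a 1
  have hA1 : A1 F q d ⊆ g '' {a | ∀ i, a i < q} := by
    rintro _ ⟨a0, a1, a2, h0, hsum, h1, h2, rfl⟩
    have : 0 < q := hq ▸ Fintype.card_pos
    refine ⟨Finsupp.single 0 a1 + Finsupp.single 1 a2, fun i => ?_, ?_⟩
    · fin_cases i <;> simp <;> omega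
    · simp [g, show d - a1 - a2 = a0 by omega]
  refine (LinearIndepOn.image_of_comp g _ ?_).mono hA1
  refine (hq ▸ linearIndepOn_prod_pow F (Fin 2)).congr fun a _ => ?_
  funext x
  simp [g, ev_apply, affinePoint, Fin.prod_univ_two]

theorem linearIndepOn_ev_pointAtInfinity_A2 (hq : Fintype.card F = q) (d : ℕ) :
    LinearIndepOn F (LinearMap.funLeft F F pointAtInfinity ∘ ev F) (A2 F q d) := by
  let g (a : Fin 1 →₀ ℕ) : MvPolynomial (Fin 3) F := X 1 ^ (d - a 0) * X 2 ^ a 0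
  have hA2 : A2 F q d ⊆ g '' {a | ∀ i, a i < q} := by
    rintro _ ⟨a1, a2, h1, hsum, h2, rfl⟩
    have : 0 < q := hq ▸ Fintype.card_pos
    refine ⟨Finsupp.single 0 a2, fun i => ?_, ?_⟩
    · fin_cases i; simp; omega
    · simp [g, show d - a2 = a1 by omega]
  refine (LinearIndepOn.image_of_comp g _ ?_).mono hA2
  refine (hq ▸ linearIndepOn_prod_pow F (Fin 1)).congr fun a _ => ?_
  funext x
  simp [g, ev_apply, pointAtInfinity]

theorem linearIndepOn_ev_A (hq : Fintype.card F = q) (d : ℕ) :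
    LinearIndepOn F (ev F) (A1 F q d ∪ A2 F q d ∪ A3 F d) :=
  (((linearIndepOn_ev_affinePoint_A1 hq d).of_comp _).union_of_map_eq_zero _
    (fun _ => ev_pointAtInfinity_eq_zero_of_mem_A1) (linearIndepOn_ev_pointAtInfinity_A2 hq d))
    |>.union_of_map_eq_zero _ (fun _ => ev_cornerPoint_eq_zero_of_mem_A1_union_A2)
      (linearIndepOn_ev_cornerPoint_A3 d)

theorem exists_mem_A_ev_eq (hq : Fintype.card F = q) (a0 a1 a2 : ℕ) :
    ∃ M ∈ A1 F q (a0 + a1 + a2) ∪ A2 F q (a0 + a1 + a2) ∪ A3 F (a0 + a1 + a2),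
      ev F (X 0 ^ a0 * X 1 ^ a1 * X 2 ^ a2) = ev F M := by
  subst hq
  obtain ⟨b1, k1, hb1, rfl, hpow1⟩ := FiniteField.exists_le_card_sub_one_pow_eq (K := F) a1
  obtain ⟨b2, k2, hb2, rfl, hpow2⟩ := FiniteField.exists_le_card_sub_one_pow_eq (K := F) a2
  rcases Nat.eq_zero_or_pos a0 with rfl | h0
  · rcases Nat.eq_zero_or_pos (b1 + (Fintype.card F - 1) * k1) with h1 | h1
    · refine ⟨_, Or.inr rfl, ?_⟩
      rw [h1]
      simp
    · refine ⟨X 1 ^ (b1 + (Fintype.card F - 1) * k1 + (Fintype.card F - 1) * k2) * X 2 ^ b2,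
        Or.inl (Or.inr ⟨_, _, by omega, by omega, hb2, rfl⟩), ?_⟩
      funext Q
      simp [ev_apply, hpow2, FiniteField.pow_add_mul_card_sub_one _ h1.ne']
  · have := Nat.mul_add (Fintype.card F - 1) k1 k2
    refine ⟨X 0 ^ (a0 + (Fintype.card F - 1) * (k1 + k2)) * X 1 ^ b1 * X 2 ^ b2,
      Or.inl (Or.inl ⟨_, _, _, by omega, by omega, hb1, hb2, rfl⟩), ?_⟩
    funext Q
    simp [ev_apply, hpow1, hpow2, FiniteField.pow_add_mul_card_sub_one _ h0.ne']

theorem span_ev_A_eq_PRM (hq : Fintype.card F = q) (d : ℕ) :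
    Submodule.span F (ev F '' (A1 F q d ∪ A2 F q d ∪ A3 F d)) = PRM F d := by
  apply le_antisymm
  · rw [Submodule.span_le]
    rintro _ ⟨M, hM, rfl⟩
    exact ⟨M, isHomogeneous_of_mem_A hM, rfl⟩
  · rintro _ ⟨p, hp, rfl⟩
    rw [p.as_sum, map_sum]
    refine Submodule.sum_mem _ fun m hm => ?_
    have hdeg : m 0 + m 1 + m 2 = d := by
      simpa [Finsupp.weight_apply, Finsupp.sum_fintype, Fin.sum_univ_three] using
        hp (mem_support_iff.mp hm)
    have hmono : monomial m (coeff m p) = coeff m p • (X 0 ^ m 0 * X 1 ^ m 1 * X 2 ^ m 2) := by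
      rw [monomial_eq, Finsupp.prod_fintype _ _ fun _ => pow_zero _, Fin.prod_univ_three,
        smul_eq_C_mul]
    obtain ⟨M, hM, hev⟩ := exists_mem_A_ev_eq hq (m 0) (m 1) (m 2)
    rw [hdeg] at hM
    rw [hmono, map_smul, hev]
    exact Submodule.smul_mem _ _ (Submodule.subset_span ⟨M, hM, rfl⟩)

end ProjectivePlane

theorem stmt0 {F : Type*} [Field F] [Fintype F] (q d : ℕ) (hq : Fintype.card F = q) :
    LinearIndependent F
      (fun M : (A1 F q d ∪ A2 F q d ∪ A3 F d : Set (MvPolynomial (Fin 3) F)) =>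
        ev F (M : MvPolynomial (Fin 3) F)) ∧
    Submodule.span F (ev F '' (A1 F q d ∪ A2 F q d ∪ A3 F d)) = PRM F d ∧
    Module.finrank F (PRM F d) = (A1 F q d ∪ A2 F q d ∪ A3 F d).ncard := by
  have hli := linearIndepOn_ev_A hq d
  have hspan := span_ev_A_eq_PRM hq d
  exact ⟨hli, hspan, hspan ▸ hli.finrank_span_image_eq_ncard⟩
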